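/- arXiv:2312.08509 — 11 statements merged into one kernel-verified Lean document; each statement's English description precedes it below -/
import Mathlib

section
/- Given an XOS valuation function v on subsets of [m] with binary marginals (i.e., v is a pointwise maximum of a family of additive functions, and adding any single good to any set increases v by 0 or 1), for any set S ⊆ [m] there exists a subset S' ⊆ S such that v(S') = v(S) = |S'|. -/
open Finset

/-- `v` is an XOS valuation: pointwise maximum of a nonempty family of
additive (nonnegative) functions. -/
def IsXOS (m : ℕ) (v : Finset (Fin m) → ℝ) : Prop :=
  ∃ F : Set (Fin m → ℝ), F.Nonempty ∧ (∀ f ∈ F, ∀ g, 0 ≤ f g) ∧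
    (∀ S : Finset (Fin m), ∃ f ∈ F, v S = ∑ g ∈ S, f g) ∧
    (∀ f ∈ F, ∀ S : Finset (Fin m), ∑ g ∈ S, f g ≤ v S)

/-- `v` has binary marginals: adding any good changes the value by 0 or 1. -/
def BinaryMarginals (m : ℕ) (v : Finset (Fin m) → ℝ) : Prop :=
  ∀ S : Finset (Fin m), ∀ g : Fin m,
    v (insert g S) - v S = 0 ∨ v (insert g S) - v S = 1

/-- `A` is a partition of the goods `[m]` into `n` (possibly empty) bundles. -/
def IsPartition (m n : ℕ) (A : Fin n → Finset (Fin m)) : Prop :=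
  (∀ i j : Fin n, i ≠ j → Disjoint (A i) (A j)) ∧
    Finset.univ.biUnion A = (Finset.univ : Finset (Fin m))

/-- `μ` is the maximin share of `v` over `n` agents: the maximum over all
partitions into `n` bundles of the minimum bundle value. -/
def IsMMS (m n : ℕ) (v : Finset (Fin m) → ℝ) (μ : ℝ) : Prop :=
  (∃ A : Fin n → Finset (Fin m), IsPartition m n A ∧ ∀ j, μ ≤ v (A j)) ∧
  (∀ A : Fin n → Finset (Fin m), IsPartition m n A → ∃ j, v (A j) ≤ μ)

/-- `a` is the AnyPrice share (price-based): the minimum over nonnegative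
price vectors of total price 1 of the maximum value of a bundle of price
at most `1/n`. -/
def IsAPS (m n : ℕ) (v : Finset (Fin m) → ℝ) (a : ℝ) : Prop :=
  (∃ p : Fin m → ℝ, (∀ g, 0 ≤ p g) ∧ (∑ g, p g = 1) ∧
    ∀ S : Finset (Fin m), (∑ g ∈ S, p g) ≤ 1 / n → v S ≤ a) ∧
  (∀ p : Fin m → ℝ, (∀ g, 0 ≤ p g) → (∑ g, p g = 1) →
    ∃ S : Finset (Fin m), (∑ g ∈ S, p g) ≤ 1 / n ∧ a ≤ v S)

theorem xos_exact_subset {m : ℕ} (v : Finset (Fin m) → ℝ)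
    (hxos : IsXOS m v) (hbm : BinaryMarginals m v) (S : Finset (Fin m)) :
    ∃ S' ⊆ S, v S' = v S ∧ v S' = (S'.card : ℝ) := by
  obtain ⟨F, -, hF0, hFex, hFle⟩ := hxos
  have hempty : v ∅ = 0 := by
    obtain ⟨f, -, hf⟩ := hFex ∅
    simpa using hf
  have hcard : ∀ T : Finset (Fin m), v T ≤ (T.card : ℝ) := by
    intro T
    induction T using Finset.induction with
    | empty => simp [hempty]
    | @insert g T hg ih =>
      rcases hbm T g with h | h
      · have : v (insert g T) = v T := by linarith
        rw [this, Finset.card_insert_of_notMem hg]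
        push_cast; linarith
      · rw [Finset.card_insert_of_notMem hg]
        push_cast; linarith
  induction S using Finset.strongInduction with
  | _ S ih =>
    by_cases h : ∃ g ∈ S, v (S.erase g) = v S
    · obtain ⟨g, hg, heq⟩ := h
      obtain ⟨S', hsub, h1, h2⟩ := ih (S.erase g) (Finset.erase_ssubset hg)
      exact ⟨S', hsub.trans (Finset.erase_subset _ _), by rw [h1, heq], h2⟩
    · push_neg at h
      have herase : ∀ g ∈ S, v (S.erase g) = v S - 1 := by
        intro g hg
        have hins : insert g (S.erase g) = S := Finset.insert_erase hg
        rcases hbm (S.erase g) g with h' | h' <;> rw [hins] at h'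
        · exact absurd (by linarith) (h g hg)
        · linarith
      obtain ⟨f, hfF, hfS⟩ := hFex S
      have hge1 : ∀ g ∈ S, (1 : ℝ) ≤ f g := by
        intro g hg
        have hsum : f g + ∑ x ∈ S.erase g, f x = ∑ x ∈ S, f x :=
          Finset.add_sum_erase S f hg
        have hle : ∑ x ∈ S.erase g, f x ≤ v (S.erase g) := hFle f hfF _
        rw [herase g hg] at hle
        linarith [hfS ▸ hsum]
      have hvge : (S.card : ℝ) ≤ v S := by
        have : (S.card : ℝ) = ∑ _g ∈ S, (1 : ℝ) := by simp
        rw [this, hfS]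
        exact Finset.sum_le_sum hge1
      exact ⟨S, le_refl _, rfl, le_antisymm (hcard S) hvge⟩
end

section
/- There exists a subadditive valuation function v on subsets of a 3-element set with binary marginals, namely v(S) = 2 if S is the full set and v(S) = 1 if S is a nonempty strict subset and v(∅)=0, such that no subset S' of the full set satisfies v(S') = v([3]) = |S'|. Moreover this v is subadditive and has binary marginals but is not XOS. -/
open Finset

theorem subadditive_binary_not_xos :
    ∃ v : Finset (Fin 3) → ℝ,
      (∀ S : Finset (Fin 3),
        v S = if S = Finset.univ then 2 else if S = ∅ then 0 else 1) ∧
      v ∅ = 0 ∧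
      (∀ A B : Finset (Fin 3), v (A ∪ B) ≤ v A + v B) ∧
      BinaryMarginals 3 v ∧
      (¬ ∃ S' ⊆ (Finset.univ : Finset (Fin 3)),
        v S' = v Finset.univ ∧ v S' = (S'.card : ℝ)) ∧
      ¬ IsXOS 3 v := by
  have hEU : (∅ : Finset (Fin 3)) ≠ Finset.univ := by decide
  refine ⟨fun S => if S = Finset.univ then 2 else if S = ∅ then 0 else 1,
    fun S => rfl, by simp [hEU], ?_, ?_, ?_, ?_⟩
  · -- subadditive
    intro A B
    rcases eq_or_ne A ∅ with hA | hA
    · subst hA; simp [hEU]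
    rcases eq_or_ne B ∅ with hB | hB
    · subst hB; simp [hEU]
    have hAB : A ∪ B ≠ ∅ := by
      rw [Ne, Finset.union_eq_empty]; tauto
    simp only
    split_ifs <;> first | norm_num | simp_all
  · -- binary marginals
    intro S g
    by_cases h1 : insert g S = Finset.univ <;> by_cases h2 : S = Finset.univ <;>
      by_cases h3 : S = ∅
    · exact absurd (h3.symm.trans h2) hEU
    · left; simp [h1, h2]
    · exfalso; subst h3
      have := congrArg Finset.card h1
      simp at this
    · right; simp [h1, h2, h3]; norm_num
    · exact absurd (h3.symm.trans h2) hEU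
    · exfalso; subst h2
      exact h1 (Finset.insert_eq_self.mpr (Finset.mem_univ g))
    · right; subst h3
      have h1' : ({g} : Finset (Fin 3)) ≠ Finset.univ := by simpa using h1
      simp [h1', hEU]
    · left
      have h4 : insert g S ≠ ∅ := Finset.insert_ne_empty _ _
      simp [h1, h2, h3, h4]
  · -- no exact subset
    rintro ⟨S, hS, h1, h2⟩
    by_cases hu : S = Finset.univ
    · subst hu
      simp only [if_pos rfl] at h2
      rw [show (Finset.univ : Finset (Fin 3)).card = 3 from rfl] at h2
      norm_num at h2
    · by_cases he : S = ∅
      · subst he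
        simp only [hEU, if_neg, if_pos rfl, if_true] at h1
        norm_num at h1
      · simp only [hu, he, if_neg, if_pos rfl] at h1
        norm_num at h1
  · -- not XOS
    rintro ⟨F, hne, hnn, hcov, hle⟩
    obtain ⟨f, hf, hfeq⟩ := hcov Finset.univ
    have huniv : f 0 + f 1 + f 2 = 2 := by
      have hfeq' : (2:ℝ) = f 0 + f 1 + f 2 := by
        simpa [Fin.sum_univ_three] using hfeq
      linarith
    have key : ∀ a b : Fin 3, a ≠ b → f a + f b ≤ 1 := by
      intro a b hab
      have h := hle f hf {a, b}
      have hu1 : ({a, b} : Finset (Fin 3)) ≠ Finset.univ := by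
        intro h'
        have := congrArg Finset.card h'
        rw [Finset.card_pair hab] at this
        simp at this
      have hu2 : ({a, b} : Finset (Fin 3)) ≠ ∅ := by simp
      rw [Finset.sum_pair hab] at h
      simpa [hu1, hu2] using h
    have k1 := key 0 1 (by decide)
    have k2 := key 0 2 (by decide)
    have k3 := key 1 2 (by decide)
    linarith
end

section
/- Let v be an XOS valuation with binary marginals on goods [m], let n ≥ 1, and let μ = MMS be the maximin share value of v over n bundles (the maximum over all partitions of [m] into n parts of the minimum part value). Then there exists a partition of [m] into n+1 sets A_1, ..., A_n, R such that μ ≤ v(A_j) ≤ μ + 1 for all j ∈ [n] and v(R) ≤ μ. -/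
open Finset

section Aux
variable {m : ℕ} {v : Finset (Fin m) → ℝ}

lemma aux_insert_le (hbm : BinaryMarginals m v) (S : Finset (Fin m)) (g : Fin m) :
    v S ≤ v (insert g S) ∧ v (insert g S) ≤ v S + 1 := by
  rcases hbm S g with h | h <;> constructor <;> linarith

lemma aux_mono_union (hbm : BinaryMarginals m v) (S T : Finset (Fin m)) :
    v S ≤ v (S ∪ T) := by
  classical
  induction T using Finset.induction_on with
  | empty => simp
  | @insert g T hg ih =>
    rw [Finset.union_insert]
    exact le_trans ih (aux_insert_le hbm _ _).1

lemma aux_mono (hbm : BinaryMarginals m v) {S T : Finset (Fin m)} (h : S ⊆ T) :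
    v S ≤ v T := by
  have := aux_mono_union hbm S T
  rwa [Finset.union_eq_right.mpr h] at this

lemma aux_vnat (hv0 : v ∅ = 0) (hbm : BinaryMarginals m v) (S : Finset (Fin m)) :
    ∃ k : ℕ, v S = k := by
  classical
  induction S using Finset.induction_on with
  | empty => exact ⟨0, by simpa⟩
  | @insert g T hg ih =>
    obtain ⟨k, hk⟩ := ih
    rcases hbm T g with h | h
    · exact ⟨k, by linarith⟩
    · exact ⟨k + 1, by push_cast; linarith⟩

lemma aux_trim (hv0 : v ∅ = 0) (hbm : BinaryMarginals m v)
    (C T : Finset (Fin m)) (c : ℕ) (h1 : v C < c) (h2 : (c : ℝ) ≤ v (C ∪ T)) :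
    ∃ S ⊆ T, v (C ∪ S) = c := by
  classical
  have hne : (T.powerset.filter (fun S => (c : ℝ) ≤ v (C ∪ S))).Nonempty :=
    ⟨T, by simp [h2]⟩
  obtain ⟨S, hS, hmin⟩ := Finset.exists_min_image _ (fun S => S.card) hne
  simp only [mem_filter, mem_powerset] at hS
  obtain ⟨hST, hcS⟩ := hS
  refine ⟨S, hST, le_antisymm ?_ hcS⟩
  have hSne : S.Nonempty := by
    rcases S.eq_empty_or_nonempty with rfl | h
    · rw [Finset.union_empty] at hcS; linarith
    · exact h
  obtain ⟨g, hg⟩ := hSne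
  have herase : ¬ ((c : ℝ) ≤ v (C ∪ S.erase g)) := by
    intro hc
    have h1' := hmin (S.erase g) (by
      simp only [mem_filter, mem_powerset]
      exact ⟨(S.erase_subset g).trans hST, hc⟩)
    have h2' : (S.erase g).card < S.card := Finset.card_erase_lt_of_mem hg
    omega
  push_neg at herase
  obtain ⟨k, hk⟩ := aux_vnat hv0 hbm (C ∪ S.erase g)
  have hklt : k < c := by rw [hk] at herase; exact_mod_cast herase
  have hins : C ∪ S = insert g (C ∪ S.erase g) := by
    rw [← Finset.union_insert, Finset.insert_erase hg]
  have hle : v (C ∪ S) ≤ v (C ∪ S.erase g) + 1 := by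
    rw [hins]; exact (aux_insert_le hbm _ _).2
  have : (k : ℝ) + 1 ≤ c := by exact_mod_cast hklt
  rw [hk] at hle; linarith

variable {n : ℕ} {μ : ℝ}

/-- Not all bundles of a pairwise-disjoint family can have value `μ + 1`. -/
lemma aux_no_all_high (hbm : BinaryMarginals m v) (hn : 1 ≤ n)
    (hup : ∀ A : Fin n → Finset (Fin m), IsPartition m n A → ∃ j, v (A j) ≤ μ)
    (A : Fin n → Finset (Fin m))
    (hdisj : ∀ i j : Fin n, i ≠ j → Disjoint (A i) (A j)) :
    ¬ (∀ j, v (A j) = μ + 1) := by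
  classical
  intro hall
  set R : Finset (Fin m) := Finset.univ \ Finset.univ.biUnion A with hR
  have hRdisj : ∀ j, Disjoint (A j) R := by
    intro j
    exact (Finset.sdiff_disjoint.symm).mono_left (Finset.subset_biUnion_of_mem A (mem_univ j))
  set j0 : Fin n := ⟨0, hn⟩ with hj0
  set Q : Fin n → Finset (Fin m) := fun j => if j = j0 then A j0 ∪ R else A j with hQ
  have hQpart : IsPartition m n Q := by
    constructor
    · intro i j hij
      simp only [hQ]
      by_cases hi : i = j0 <;> by_cases hj : j = j0
      · exact absurd (hi.trans hj.symm) hij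
      · simp only [hi, if_pos rfl, if_neg hj]
        exact Finset.disjoint_union_left.mpr
          ⟨hdisj j0 j (fun h => hj h.symm), (hRdisj j).symm⟩
      · simp only [hj, if_pos rfl, if_neg hi]
        exact Finset.disjoint_union_right.mpr
          ⟨hdisj i j0 (fun h => hi h), hRdisj i⟩
      · simp only [if_neg hi, if_neg hj]
        exact hdisj i j hij
    · apply Finset.eq_univ_of_forall
      intro g
      rw [Finset.mem_biUnion]
      by_cases hg : g ∈ Finset.univ.biUnion A
      · rw [Finset.mem_biUnion] at hg
        obtain ⟨j, _, hgj⟩ := hg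
        by_cases hj : j = j0
        · exact ⟨j0, mem_univ _, by simp only [hQ, if_pos rfl]; exact Finset.mem_union_left _ (hj ▸ hgj)⟩
        · exact ⟨j, mem_univ _, by simp only [hQ, if_neg hj]; exact hgj⟩
      · refine ⟨j0, mem_univ _, ?_⟩
        simp only [hQ, if_pos rfl]
        exact Finset.mem_union_right _ (by rw [hR]; exact Finset.mem_sdiff.mpr ⟨mem_univ g, hg⟩)
  obtain ⟨j, hj⟩ := hup Q hQpart
  have hjge : μ + 1 ≤ v (Q j) := by
    by_cases h : j = j0
    · subst h
      simp only [hQ, if_pos rfl]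
      calc μ + 1 = v (A j0) := (hall j0).symm
        _ ≤ v (A j0 ∪ R) := aux_mono_union hbm _ _
    · simp only [hQ, if_neg h]
      exact (hall j).ge
  linarith

lemma aux_grow (hv0 : v ∅ = 0) (hbm : BinaryMarginals m v) (hn : 1 ≤ n)
    (μk : ℕ) (hμk : μ = (μk : ℝ))
    (hup : ∀ A : Fin n → Finset (Fin m), IsPartition m n A → ∃ j, v (A j) ≤ μ) :
    ∀ k : ℕ, ∀ A : Fin n → Finset (Fin m),
      (∀ i j : Fin n, i ≠ j → Disjoint (A i) (A j)) →
      (∀ j, v (A j) = μ ∨ v (A j) = μ + 1) →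
      (Finset.univ.filter (fun j => v (A j) = μ)).card ≤ k →
      ∃ (A' : Fin n → Finset (Fin m)) (R : Finset (Fin m)),
        (∀ i j : Fin n, i ≠ j → Disjoint (A' i) (A' j)) ∧
        (∀ j : Fin n, Disjoint (A' j) R) ∧
        (Finset.univ.biUnion A' ∪ R = (Finset.univ : Finset (Fin m))) ∧
        (∀ j : Fin n, μ ≤ v (A' j) ∧ v (A' j) ≤ μ + 1) ∧
        v R ≤ μ := by
  classical
  intro k
  induction k with
  | zero =>
    intro A hdisj hval hcard
    exfalso
    have hall : ∀ j, v (A j) = μ + 1 := by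
      intro j
      rcases hval j with h | h
      · exfalso
        have : j ∈ Finset.univ.filter (fun j => v (A j) = μ) := by
          simp [h]
        have := Finset.card_pos.mpr ⟨j, this⟩
        omega
      · exact h
    exact aux_no_all_high hbm hn hup A hdisj hall
  | succ k ih =>
    intro A hdisj hval hcard
    set R : Finset (Fin m) := Finset.univ \ Finset.univ.biUnion A with hRdef
    have hRdisj : ∀ j, Disjoint (A j) R := by
      intro j
      exact (Finset.sdiff_disjoint.symm).mono_left (Finset.subset_biUnion_of_mem A (mem_univ j))
    by_cases hR : v R ≤ μ
    · refine ⟨A, R, hdisj, hRdisj, ?_, ?_, hR⟩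
      · rw [hRdef]
        exact Finset.union_sdiff_of_subset (Finset.subset_univ _)
      · intro j
        rcases hval j with h | h <;> constructor <;> linarith
    · push_neg at hR
      obtain ⟨r, hr⟩ := aux_vnat hv0 hbm R
      have hRge : (((μk + 1 : ℕ)) : ℝ) ≤ v R := by
        have : μk < r := by rw [hr, hμk] at hR; exact_mod_cast hR
        rw [hr]; exact_mod_cast this
      have hex : ∃ j, v (A j) = μ := by
        by_contra hno
        push_neg at hno
        exact aux_no_all_high hbm hn hup A hdisj
          (fun j => (hval j).resolve_left (hno j))
      obtain ⟨j₀, hj₀⟩ := hex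
      have hlt : v (A j₀) < ((μk + 1 : ℕ) : ℝ) := by
        rw [hj₀, hμk]; push_cast; linarith
      have hge : ((μk + 1 : ℕ) : ℝ) ≤ v (A j₀ ∪ R) := by
        refine le_trans hRge ?_
        rw [Finset.union_comm]
        exact aux_mono_union hbm _ _
      obtain ⟨S, hSR, hSval⟩ := aux_trim hv0 hbm (A j₀) R (μk + 1) hlt hge
      have hSval' : v (A j₀ ∪ S) = μ + 1 := by rw [hSval, hμk]; push_cast; ring
      set A' : Fin n → Finset (Fin m) := Function.update A j₀ (A j₀ ∪ S) with hA'
      have hA'j₀ : A' j₀ = A j₀ ∪ S := Function.update_self _ _ _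
      have hA'ne : ∀ j, j ≠ j₀ → A' j = A j := fun j hj => Function.update_of_ne hj _ _
      have hdisj' : ∀ i j : Fin n, i ≠ j → Disjoint (A' i) (A' j) := by
        intro i j hij
        by_cases hi : i = j₀ <;> by_cases hj : j = j₀
        · exact absurd (hi.trans hj.symm) hij
        · rw [hi, hA'j₀, hA'ne j hj]
          exact Finset.disjoint_union_left.mpr
            ⟨hdisj j₀ j (fun h => hj h.symm),
             Disjoint.mono_left hSR (hRdisj j).symm⟩
        · rw [hj, hA'j₀, hA'ne i hi]
          exact Finset.disjoint_union_right.mpr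
            ⟨hdisj i j₀ (hj ▸ hij), Disjoint.mono_right hSR (hRdisj i)⟩
        · rw [hA'ne i hi, hA'ne j hj]; exact hdisj i j hij
      have hval' : ∀ j, v (A' j) = μ ∨ v (A' j) = μ + 1 := by
        intro j
        by_cases hj : j = j₀
        · rw [hj, hA'j₀]; exact Or.inr hSval'
        · rw [hA'ne j hj]; exact hval j
      have hcard' : (Finset.univ.filter (fun j => v (A' j) = μ)).card ≤ k := by
        have hsub : (Finset.univ.filter (fun j => v (A' j) = μ)) ⊆
            (Finset.univ.filter (fun j => v (A j) = μ)).erase j₀ := by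
          intro j hj
          simp only [mem_filter, mem_univ, true_and] at hj
          have hjne : j ≠ j₀ := by
            intro h; subst h
            rw [hA'j₀, hSval'] at hj
            linarith
          rw [hA'ne j hjne] at hj
          exact Finset.mem_erase.mpr ⟨hjne, by simp [hj]⟩
        have hmem : j₀ ∈ Finset.univ.filter (fun j => v (A j) = μ) := by simp [hj₀]
        have := Finset.card_le_card hsub
        rw [Finset.card_erase_of_mem hmem] at this
        omega
      exact ih A' hdisj' hval' hcard'

end Aux

theorem xos_balanced_mms_partition {m n : ℕ} (v : Finset (Fin m) → ℝ)
    (hxos : IsXOS m v) (hbm : BinaryMarginals m v) (hn : 1 ≤ n)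
    (μ : ℝ) (hmms : IsMMS m n v μ) :
    ∃ (A : Fin n → Finset (Fin m)) (R : Finset (Fin m)),
      (∀ i j : Fin n, i ≠ j → Disjoint (A i) (A j)) ∧
      (∀ j : Fin n, Disjoint (A j) R) ∧
      (Finset.univ.biUnion A ∪ R = (Finset.univ : Finset (Fin m))) ∧
      (∀ j : Fin n, μ ≤ v (A j) ∧ v (A j) ≤ μ + 1) ∧
      v R ≤ μ := by
  classical
  obtain ⟨F, hFne, hFpos, hach, hbnd⟩ := hxos
  have hv0 : v ∅ = 0 := by
    obtain ⟨f, hf, he⟩ := hach ∅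
    simpa using he
  obtain ⟨P, hPpart, hPlo⟩ := hmms.1
  obtain ⟨j0, hj0⟩ := hmms.2 P hPpart
  have hμeq : μ = v (P j0) := le_antisymm (hPlo j0) hj0
  obtain ⟨μk, hμk⟩ : ∃ k : ℕ, μ = (k : ℝ) := by
    obtain ⟨k, hk⟩ := aux_vnat hv0 hbm (P j0)
    exact ⟨k, hμeq ▸ hk⟩
  -- trim each P j to a bundle of value exactly μ
  have hB : ∀ j, ∃ B, B ⊆ P j ∧ v B = μ := by
    intro j
    rcases Nat.eq_zero_or_pos μk with h0 | hpos
    · exact ⟨∅, Finset.empty_subset _, by rw [hv0, hμk, h0]; simp⟩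
    · have h1 : v ∅ < (μk : ℝ) := by rw [hv0]; exact_mod_cast hpos
      have h2 : (μk : ℝ) ≤ v (∅ ∪ P j) := by
        rw [Finset.empty_union, ← hμk]; exact hPlo j
      obtain ⟨S, hS1, hS2⟩ := aux_trim hv0 hbm ∅ (P j) μk h1 h2
      rw [Finset.empty_union] at hS2
      exact ⟨S, hS1, by rw [hS2, hμk]⟩
  choose B hBsub hBval using hB
  have hBdisj : ∀ i j : Fin n, i ≠ j → Disjoint (B i) (B j) := by
    intro i j hij
    exact Disjoint.mono (hBsub i) (hBsub j) (hPpart.1 i j hij)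
  have hBval' : ∀ j, v (B j) = μ ∨ v (B j) = μ + 1 := fun j => Or.inl (hBval j)
  exact aux_grow hv0 hbm hn μk hμk hmms.2 n B hBdisj hBval'
    ((Finset.card_filter_le _ _).trans (by simp))
end

section
/- Let v be an XOS valuation with binary marginals, n ≥ 1 agents, MMS the maximin share value, and APS the AnyPrice share defined via the price-based characterization: APS = min over price vectors p with total price 1 of the maximum value of any bundle with price at most 1/n. Then APS ≤ 2·MMS + 1. -/
open Finset

/-!
Since marginals are 0 or 1, the maximin share is an integer `k`. A minimal set of value at least
`k + 1` has exactly `k + 1` goods: the additive function of the XOS family supporting it gives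
weight 1 to each of its goods. Greedily pack disjoint such bundles. Packing `n` of them would
yield a partition whose bundles are all worth more than `k`, so the packing stops after `i < n`
bundles, whose union `U` has fewer than `n (k + 1)` goods and leaves a remainder worth at most
`k`. Under uniform prices on `U`, an affordable bundle contains at most `k` goods of `U`, so by
subadditivity it is worth at most `2k`.
-/

open Function

lemma Fin.pairwise_disjoint_snoc {α : Type*} {j : ℕ} {B : Fin j → Finset α} {T : Finset α}
    (hB : Pairwise (Disjoint on B)) (hT : ∀ i, Disjoint (B i) T) :
    Pairwise (Disjoint on (Fin.snoc B T : Fin (j + 1) → Finset α)) := by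
  intro i i' hii'
  induction i using Fin.lastCases with
  | last =>
    induction i' using Fin.lastCases with
    | last => exact absurd rfl hii'
    | cast i' => simpa [onFun] using (hT i').symm
  | cast i =>
    induction i' using Fin.lastCases with
    | last => simpa [onFun] using hT i
    | cast i' => simpa [onFun] using hB fun h => hii' (congrArg _ h)

lemma exists_isPartition_of_pairwise_disjoint {m n : ℕ} (i₀ : Fin n)
    {B : Fin n → Finset (Fin m)} (hB : Pairwise (Disjoint on B)) :
    ∃ A, IsPartition m n A ∧ ∀ i, B i ⊆ A i := by
  set R := univ \ univ.biUnion B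
  have hR : ∀ i, Disjoint (B i) R := fun i =>
    disjoint_sdiff.mono_left (subset_biUnion_of_mem B (mem_univ i))
  refine ⟨fun i => if i = i₀ then B i ∪ R else B i, ⟨fun i j hij => ?_, ?_⟩, fun i => ?_⟩
  · dsimp only
    split_ifs with hi hj hj
    · exact absurd (hi.trans hj.symm) hij
    · exact disjoint_union_left.mpr ⟨hB hij, (hR j).symm⟩
    · exact disjoint_union_right.mpr ⟨hB hij, hR i⟩
    · exact hB hij
  · refine eq_univ_of_forall fun g => ?_
    by_cases hg : g ∈ univ.biUnion B
    · obtain ⟨i, -, hgi⟩ := mem_biUnion.mp hg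
      exact mem_biUnion.mpr ⟨i, mem_univ i, by split_ifs <;> simp [hgi]⟩
    · exact mem_biUnion.mpr ⟨i₀, mem_univ i₀, by simp [R, hg]⟩
  · dsimp only
    split_ifs <;> simp

section Valuation

variable {m : ℕ} {v : Finset (Fin m) → ℝ}

lemma IsXOS.apply_empty (hxos : IsXOS m v) : v ∅ = 0 := by
  obtain ⟨F, -, -, hrep, -⟩ := hxos
  obtain ⟨f, -, hf⟩ := hrep ∅
  simpa using hf

lemma IsXOS.apply_union_le (hxos : IsXOS m v) (s t : Finset (Fin m)) :
    v (s ∪ t) ≤ v s + v t := by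
  obtain ⟨F, -, hnn, hrep, hle⟩ := hxos
  obtain ⟨f, hf, hst⟩ := hrep (s ∪ t)
  have hinter : 0 ≤ ∑ g ∈ s ∩ t, f g := sum_nonneg fun g _ => hnn f hf g
  linarith [sum_union_inter (s₁ := s) (s₂ := t) (f := f), hle f hf s, hle f hf t]

lemma BinaryMarginals.apply_le_apply_insert (hbm : BinaryMarginals m v) (S : Finset (Fin m))
    (g : Fin m) : v S ≤ v (insert g S) := by
  rcases hbm S g with h | h <;> linarith

lemma BinaryMarginals.apply_insert_le (hbm : BinaryMarginals m v) (S : Finset (Fin m))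
    (g : Fin m) : v (insert g S) ≤ v S + 1 := by
  rcases hbm S g with h | h <;> linarith

lemma BinaryMarginals.mono (hbm : BinaryMarginals m v) {s t : Finset (Fin m)} (hst : s ⊆ t) :
    v s ≤ v t := by
  suffices ∀ u, v s ≤ v (s ∪ u) by simpa [union_eq_right.mpr hst] using this t
  intro u
  induction u using Finset.induction with
  | empty => simp
  | insert g u _ ih => exact ih.trans (union_insert g s u ▸ hbm.apply_le_apply_insert _ g)

lemma BinaryMarginals.apply_le_card (hbm : BinaryMarginals m v) (h0 : v ∅ = 0)
    (S : Finset (Fin m)) : v S ≤ #S := by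
  induction S using Finset.induction with
  | empty => simp [h0]
  | insert g S hg ih =>
    rw [card_insert_of_notMem hg, Nat.cast_succ]
    linarith [hbm.apply_insert_le S g]

lemma BinaryMarginals.exists_apply_eq_natCast (hbm : BinaryMarginals m v) (h0 : v ∅ = 0)
    (S : Finset (Fin m)) : ∃ k : ℕ, v S = k := by
  induction S using Finset.induction with
  | empty => exact ⟨0, by simp [h0]⟩
  | insert g S _ ih =>
    obtain ⟨k, hk⟩ := ih
    rcases hbm S g with h | h
    · exact ⟨k, by linarith⟩
    · exact ⟨k + 1, by push_cast; linarith⟩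

lemma BinaryMarginals.apply_le_of_lt_add_one (hbm : BinaryMarginals m v) (h0 : v ∅ = 0)
    {S : Finset (Fin m)} {k : ℕ} (h : v S < k + 1) : v S ≤ k := by
  obtain ⟨l, hl⟩ := hbm.exists_apply_eq_natCast h0 S
  rw [hl] at h ⊢
  exact_mod_cast Nat.lt_succ_iff.mp (by exact_mod_cast h)

lemma IsXOS.apply_eq_card_of_forall_apply_erase_lt (hxos : IsXOS m v)
    (hbm : BinaryMarginals m v) {T : Finset (Fin m)} (hT : ∀ g ∈ T, v (T.erase g) < v T) :
    v T = #T := by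
  refine le_antisymm (hbm.apply_le_card hxos.apply_empty T) ?_
  obtain ⟨F, -, -, hrep, hle⟩ := hxos
  obtain ⟨f, hf, hfT⟩ := hrep T
  have hone : ∀ g ∈ T, 1 ≤ f g := by
    intro g hg
    have hstep : v T = v (T.erase g) + 1 := by
      have h := hbm (T.erase g) g
      rw [insert_erase hg] at h
      rcases h with h | h <;> linarith [hT g hg]
    linarith [add_sum_erase T f hg, hle f hf (T.erase g)]
  calc (#T : ℝ) = ∑ _g ∈ T, (1 : ℝ) := by simp
    _ ≤ ∑ g ∈ T, f g := sum_le_sum hone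
    _ = v T := hfT.symm

lemma IsXOS.exists_subset_card_le_le_apply (hxos : IsXOS m v) (hbm : BinaryMarginals m v)
    {R : Finset (Fin m)} {h : ℕ} (hR : (h : ℝ) ≤ v R) :
    ∃ T ⊆ R, #T ≤ h ∧ (h : ℝ) ≤ v T := by
  obtain ⟨T, hTR, hmin⟩ := exists_minimal_le_of_wellFoundedLT (fun T => (h : ℝ) ≤ v T) R hR
  have herase : ∀ g ∈ T, v (T.erase g) < h := fun g hg =>
    not_le.mp (hmin.not_prop_of_lt (erase_ssubset hg))
  have hcard : v T = #T := hxos.apply_eq_card_of_forall_apply_erase_lt hbm fun g hg =>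
    (herase g hg).trans_le hmin.prop
  refine ⟨T, hTR, ?_, hmin.prop⟩
  obtain rfl | ⟨g, hg⟩ := T.eq_empty_or_nonempty
  · simp
  · have hlt : (#T : ℝ) < h + 1 := by
      rw [← hcard, ← insert_erase hg]
      linarith [hbm.apply_insert_le (T.erase g) g, herase g hg]
    exact_mod_cast Nat.lt_succ_iff.mp (by exact_mod_cast hlt)

lemma IsXOS.greedy_packing (hxos : IsXOS m v) (hbm : BinaryMarginals m v) (k j : ℕ) :
    (∃ B : Fin j → Finset (Fin m), Pairwise (Disjoint on B) ∧
      ∀ i, #(B i) ≤ k + 1 ∧ (k + 1 : ℝ) ≤ v (B i)) ∨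
    ∃ i < j, ∃ U : Finset (Fin m), #U ≤ i * (k + 1) ∧ v (univ \ U) ≤ k := by
  induction j with
  | zero => exact Or.inl ⟨Fin.elim0, fun i => i.elim0, fun i => i.elim0⟩
  | succ j ih =>
    obtain ⟨B, hdisj, hB⟩ | ⟨i, hi, U, hU, hrest⟩ := ih
    swap
    · exact Or.inr ⟨i, hi.trans j.lt_succ_self, U, hU, hrest⟩
    set U := univ.biUnion B
    by_cases hbig : (k + 1 : ℝ) ≤ v (univ \ U)
    · obtain ⟨T, hTU, hT⟩ :=
        hxos.exists_subset_card_le_le_apply hbm (h := k + 1) (by exact_mod_cast hbig)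
      have hBT : ∀ i, Disjoint (B i) T := fun i =>
        (disjoint_sdiff.mono_left (subset_biUnion_of_mem B (mem_univ i))).mono_right hTU
      refine Or.inl ⟨Fin.snoc B T, Fin.pairwise_disjoint_snoc hdisj hBT, fun i => ?_⟩
      induction i using Fin.lastCases with
      | last => simpa using hT
      | cast i => simpa using hB i
    · refine Or.inr ⟨j, j.lt_succ_self, U, ?_,
        hbm.apply_le_of_lt_add_one hxos.apply_empty (not_le.mp hbig)⟩
      calc #U ≤ ∑ i, #(B i) := card_biUnion_le
        _ ≤ ∑ _i : Fin j, (k + 1) := sum_le_sum fun i _ => (hB i).1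
        _ = j * (k + 1) := by simp

lemma IsMMS.exists_apply_eq {n : ℕ} {μ : ℝ} (hmms : IsMMS m n v μ) :
    ∃ (A : Fin n → Finset (Fin m)) (i : Fin n), v (A i) = μ := by
  obtain ⟨⟨A, hA, hμ⟩, hub⟩ := hmms
  obtain ⟨i, hi⟩ := hub A hA
  exact ⟨A, i, le_antisymm hi (hμ i)⟩

lemma IsAPS.le_add_of_card_lt (hxos : IsXOS m v) (hbm : BinaryMarginals m v) {n k : ℕ}
    {a r : ℝ} (haps : IsAPS m n v a) {U : Finset (Fin m)} (hU : #U < n * (k + 1))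
    (hrest : v (univ \ U) ≤ r) : a ≤ k + r := by
  obtain rfl | hUne := U.eq_empty_or_nonempty
  · obtain ⟨p, hp0, hp1, -⟩ := haps.1
    obtain ⟨S, -, haS⟩ := haps.2 p hp0 hp1
    rw [sdiff_empty] at hrest
    linarith [hbm.mono (subset_univ S), k.cast_nonneg (α := ℝ)]
  have hUpos : (0 : ℝ) < #U := by exact_mod_cast hUne.card_pos
  have hnpos : (0 : ℝ) < n := by
    exact_mod_cast Nat.pos_of_mul_pos_right (hU.trans_le' (Nat.zero_le _))
  set p : Fin m → ℝ := fun g => if g ∈ U then (#U : ℝ)⁻¹ else 0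
  have hp : ∀ S, ∑ g ∈ S, p g = #(S ∩ U) / #U := fun S => by
    simp [p, sum_ite_mem, div_eq_mul_inv]
  obtain ⟨S, hScheap, haS⟩ := haps.2 p (fun g => by positivity)
    (by rw [hp, univ_inter, div_self hUpos.ne'])
  have hcheap : #(S ∩ U) * n ≤ #U := by
    rw [hp, div_le_div_iff₀ hUpos hnpos, one_mul] at hScheap
    exact_mod_cast hScheap
  have hSU : #(S ∩ U) ≤ k := by
    by_contra! hlarge
    nlinarith
  calc a ≤ v S := haS
    _ ≤ v (S \ U) + v (S ∩ U) := by
      simpa only [sdiff_union_inter] using hxos.apply_union_le (S \ U) (S ∩ U)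
    _ ≤ r + k := add_le_add ((hbm.mono (sdiff_subset_sdiff (subset_univ S) le_rfl)).trans hrest)
        ((hbm.apply_le_card hxos.apply_empty _).trans (by exact_mod_cast hSU))
    _ = k + r := add_comm r k

end Valuation

theorem xos_aps_le_two_mms_add_one_general {m n : ℕ} (v : Finset (Fin m) → ℝ)
    (hxos : IsXOS m v) (hbm : BinaryMarginals m v)
    (μ a : ℝ) (hmms : IsMMS m n v μ) (haps : IsAPS m n v a) :
    a ≤ 2 * μ + 1 := by
  obtain ⟨A₀, i₀, hμ⟩ := hmms.exists_apply_eq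
  obtain ⟨k, hk⟩ := hbm.exists_apply_eq_natCast hxos.apply_empty (A₀ i₀)
  subst hμ
  rw [hk] at hmms ⊢
  rcases hxos.greedy_packing hbm k n with ⟨B, hdisj, hB⟩ | ⟨i, hi, U, hU, hrest⟩
  · obtain ⟨A, hA, hBA⟩ := exists_isPartition_of_pairwise_disjoint i₀ hdisj
    obtain ⟨j, hj⟩ := hmms.2 A hA
    linarith [(hB j).2, hbm.mono (hBA j)]
  · have hUn : #U < n * (k + 1) := hU.trans_lt (Nat.mul_lt_mul_of_pos_right hi k.succ_pos)
    linarith [haps.le_add_of_card_lt hxos hbm hUn hrest, k.cast_nonneg (α := ℝ)]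

theorem xos_aps_le_two_mms_add_one {m n : ℕ} (v : Finset (Fin m) → ℝ)
    (hxos : IsXOS m v) (hbm : BinaryMarginals m v) (hn : 1 ≤ n)
    (μ a : ℝ) (hmms : IsMMS m n v μ) (haps : IsAPS m n v a) :
    a ≤ 2 * μ + 1 :=
  xos_aps_le_two_mms_add_one_general v hxos hbm μ a hmms haps
end

section
/- Consider 6 goods and the XOS valuation v(S) = max(|S ∩ {1,2,3}|, |S ∩ {4,5,6}|). Then v has binary marginals, and the maximin share of v over 3 agents equals 1; that is, every partition of the 6 goods into 3 bundles has some bundle B with v(B) ≤ 1, while a partition with all bundle values ≥ 1 exists. -/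
open Finset

/-- The valuation `v(S) = max(|S ∩ {1,2,3}|, |S ∩ {4,5,6}|)` on 6 goods. -/
noncomputable def v6 : Finset (Fin 6) → ℝ := fun S =>
  max ((S ∩ ({0, 1, 2} : Finset (Fin 6))).card : ℝ)
      ((S ∩ ({3, 4, 5} : Finset (Fin 6))).card : ℝ)


def vN : Finset (Fin 6) → ℕ := fun S =>
  max (S ∩ ({0, 1, 2} : Finset (Fin 6))).card (S ∩ ({3, 4, 5} : Finset (Fin 6))).card

lemma v6_eq (S : Finset (Fin 6)) : v6 S = (vN S : ℝ) := by
  simp [v6, vN, Nat.cast_max]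

lemma vN_binary : ∀ S : Finset (Fin 6), ∀ g : Fin 6,
    vN (insert g S) = vN S ∨ vN (insert g S) = vN S + 1 := by decide

lemma pigeon {T B C : Finset (Fin 6)} (hT : T.card = 3) (hd : Disjoint B C)
    (hB : 2 ≤ (B ∩ T).card) (hC : 2 ≤ (C ∩ T).card) : False := by
  have hdis : Disjoint (B ∩ T) (C ∩ T) :=
    (hd.mono (inter_subset_left) (inter_subset_left))
  have hsub : (B ∩ T) ∪ (C ∩ T) ⊆ T :=
    union_subset (inter_subset_right) (inter_subset_right)
  have := Finset.card_le_card hsub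
  rw [Finset.card_union_of_disjoint hdis, hT] at this
  omega

theorem v6_binary_and_mms_one :
    BinaryMarginals 6 v6 ∧ IsMMS 6 3 v6 1 := by
  constructor
  · intro S g
    rcases vN_binary S g with h | h <;> [left; right] <;>
      rw [v6_eq, v6_eq, h] <;> push_cast <;> ring
  · constructor
    · refine ⟨![{0, 3}, {1, 4}, {2, 5}], ⟨by decide, by decide⟩, ?_⟩
      intro j
      rw [v6_eq]
      have : vN (![({0, 3} : Finset (Fin 6)), {1, 4}, {2, 5}] j) = 1 := by
        fin_cases j <;> decide
      rw [this]; norm_num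
    · intro A ⟨hdisj, _⟩
      by_contra h
      push_neg at h
      have h2 : ∀ j, 2 ≤ vN (A j) := by
        intro j
        have := h j
        rw [v6_eq] at this
        exact_mod_cast this
      have hside : ∀ j, 2 ≤ ((A j) ∩ ({0, 1, 2} : Finset (Fin 6))).card ∨
          2 ≤ ((A j) ∩ ({3, 4, 5} : Finset (Fin 6))).card := by
        intro j
        have := h2 j
        unfold vN at this
        omega
      have hc1 : (({0, 1, 2} : Finset (Fin 6))).card = 3 := by decide
      have hc2 : (({3, 4, 5} : Finset (Fin 6))).card = 3 := by decide
      have d01 : Disjoint (A 0) (A 1) := hdisj 0 1 (by decide)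
      have d02 : Disjoint (A 0) (A 2) := hdisj 0 2 (by decide)
      have d12 : Disjoint (A 1) (A 2) := hdisj 1 2 (by decide)
      rcases hside 0 with h0 | h0 <;> rcases hside 1 with h1 | h1 <;>
        rcases hside 2 with h2' | h2'
      · exact pigeon hc1 d01 h0 h1
      · exact pigeon hc1 d01 h0 h1
      · exact pigeon hc1 d02 h0 h2'
      · exact pigeon hc2 d12 h1 h2'
      · exact pigeon hc1 d12 h1 h2'
      · exact pigeon hc2 d02 h0 h2'
      · exact pigeon hc2 d01 h0 h1
      · exact pigeon hc2 d01 h0 h1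
end

section
/- For the valuation v(S) = max(|S ∩ {1,2,3}|, |S ∩ {4,5,6}|) on 6 goods and n = 3 agents, the share-based APS value is at least 2: there exist bundles T_1,...,T_6, each of value 2 under v, and weights w_i = 1/6 summing to 1, such that for every good g the total weight of bundles containing g is at most 1/3. -/
open Finset

theorem v6_share_based_aps_ge_two :
    ∃ (T : Fin 6 → Finset (Fin 6)) (w : Fin 6 → ℝ),
      (∀ k, w k = 1 / 6) ∧
      (∀ k, v6 (T k) = 2) ∧
      (∑ k, w k = 1) ∧
      (∀ g : Fin 6,
        (∑ k ∈ Finset.univ.filter (fun k => g ∈ T k), w k) ≤ 1 / 3) := by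
  refine ⟨![{0,1},{0,2},{1,2},{3,4},{3,5},{4,5}], fun _ => 1/6, fun k => rfl, ?_, by
    norm_num [Fin.sum_univ_six], ?_⟩
  · intro k
    fin_cases k <;>
      simp only [v6, Matrix.cons_val_zero, Matrix.cons_val_one, Matrix.head_cons,
        Matrix.cons_val_succ] <;>
      rw [show (2:ℝ) = ((2:ℕ):ℝ) by norm_num] <;> norm_cast
  · intro g
    rw [Finset.sum_const, nsmul_eq_mul]
    have h : (Finset.univ.filter fun k =>
        g ∈ (![{0,1},{0,2},{1,2},{3,4},{3,5},{4,5}] : Fin 6 → Finset (Fin 6)) k).card ≤ 2 := by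
      fin_cases g <;> decide
    have h2 : ((Finset.univ.filter fun k =>
        g ∈ (![{0,1},{0,2},{1,2},{3,4},{3,5},{4,5}] : Fin 6 → Finset (Fin 6)) k).card : ℝ) ≤ 2 := by
      exact_mod_cast h
    nlinarith
end

section
/- For any valuation v and any n, the AnyPrice share (price-based definition) is at least the maximin share: APS ≥ MMS. -/
open Finset

/-! Under an optimal APS price vector the `n` bundles of an MMS partition have total price 1,
so by pigeonhole one of them costs at most `1/n`. Its value is at least the MMS, and, being
affordable, at most the APS. -/

namespace IsPartition

variable {m n : ℕ} {A : Fin n → Finset (Fin m)}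

theorem sum_sum_eq (hA : IsPartition m n A) (p : Fin m → ℝ) :
    ∑ j, ∑ g ∈ A j, p g = ∑ g, p g := by
  rw [← Finset.sum_biUnion fun i _ j _ hij ↦ hA.1 i j hij, hA.2]

theorem exists_sum_le_one_div (hA : IsPartition m n A) {p : Fin m → ℝ}
    (hp : ∑ g, p g = 1) : ∃ j, ∑ g ∈ A j, p g ≤ 1 / n := by
  have htotal : ∑ j, ∑ g ∈ A j, p g = 1 := (hA.sum_sum_eq p).trans hp
  have hn : n ≠ 0 := by
    rintro rfl
    simp at htotal
  have hle : ∑ j, ∑ g ∈ A j, p g ≤ ∑ _j : Fin n, 1 / (n : ℝ) := by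
    rw [htotal, Finset.sum_const, Finset.card_univ, Fintype.card_fin, nsmul_eq_mul,
      mul_one_div_cancel (Nat.cast_ne_zero.mpr hn)]
  have : NeZero n := ⟨hn⟩
  obtain ⟨j, -, hj⟩ := Finset.exists_le_of_sum_le Finset.univ_nonempty hle
  exact ⟨j, hj⟩

end IsPartition

theorem aps_ge_mms_general {m n : ℕ} (v : Finset (Fin m) → ℝ)
    (μ a : ℝ) (hmms : IsMMS m n v μ) (haps : IsAPS m n v a) :
    μ ≤ a := by
  obtain ⟨⟨A, hA, hμ⟩, -⟩ := hmms
  obtain ⟨⟨p, -, hp, hcap⟩, -⟩ := haps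
  obtain ⟨j, hj⟩ := hA.exists_sum_le_one_div hp
  exact (hμ j).trans (hcap _ hj)

theorem aps_ge_mms {m n : ℕ} (v : Finset (Fin m) → ℝ)
    (hmono : ∀ A B : Finset (Fin m), A ⊆ B → v A ≤ v B)
    (h0 : v ∅ = 0)
    (μ a : ℝ) (hmms : IsMMS m n v μ) (haps : IsAPS m n v a) :
    μ ≤ a :=
  aps_ge_mms_general v μ a hmms haps
end

section
/- For an agent with a binary-marginal XOS valuation v and n agents, the price-based APS value equals 0 if and only if the MMS value equals 0. -/
open Finset

lemma part_of_fun {m n : ℕ} (c : Fin m → Fin n) :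
    IsPartition m n (fun i => univ.filter (fun g => c g = i)) := by
  constructor
  · intro i j hij
    simp only [disjoint_left, mem_filter]
    rintro g ⟨-, rfl⟩ ⟨-, rfl⟩
    exact hij rfl
  · ext g
    simp only [mem_biUnion, mem_univ, mem_filter, true_and, iff_true]
    exact ⟨c g, rfl⟩

theorem xos_aps_zero_iff_mms_zero {m n : ℕ} (v : Finset (Fin m) → ℝ)
    (hxos : IsXOS m v) (hbm : BinaryMarginals m v) (hn : 1 ≤ n)
    (μ a : ℝ) (hmms : IsMMS m n v μ) (haps : IsAPS m n v a) :
    a = 0 ↔ μ = 0 := by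
  obtain ⟨F, hFne, hFpos, hrep, hle⟩ := hxos
  have hnR : (0:ℝ) < n := by exact_mod_cast hn
  have hv0 : ∀ S, 0 ≤ v S := by
    intro S; obtain ⟨f, hf, hfs⟩ := hrep S
    rw [hfs]; exact Finset.sum_nonneg fun g _ => hFpos f hf g
  have hvempty : v ∅ = 0 := by
    obtain ⟨f, hf, hfs⟩ := hrep ∅; simpa using hfs
  have hmono : ∀ S T : Finset (Fin m), S ⊆ T → v S ≤ v T := by
    intro S T hST
    obtain ⟨f, hf, hfs⟩ := hrep S
    rw [hfs]
    calc ∑ g ∈ S, f g ≤ ∑ g ∈ T, f g :=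
          Finset.sum_le_sum_of_subset_of_nonneg hST fun g _ _ => hFpos f hf g
      _ ≤ v T := hle f hf T
  have hsub : ∀ S : Finset (Fin m), v S ≤ ∑ g ∈ S, v {g} := by
    intro S
    obtain ⟨f, hf, hfs⟩ := hrep S
    rw [hfs]
    refine Finset.sum_le_sum fun g _ => ?_
    simpa using hle f hf {g}
  have hμ0 : 0 ≤ μ := by
    obtain ⟨j, hj⟩ := hmms.2 _ (part_of_fun (fun _ => (⟨0, hn⟩ : Fin n)))
    exact le_trans (hv0 _) hj
  have ha0 : 0 ≤ a := by
    obtain ⟨p, hp0, hp1, hpa⟩ := haps.1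
    have h1 : v ∅ ≤ a := hpa ∅ (by rw [Finset.sum_empty]; positivity)
    linarith [hvempty ▸ h1]
  have hμa : μ ≤ a := by
    obtain ⟨A, hA, hAv⟩ := hmms.1
    obtain ⟨p, hp0, hp1, hpa⟩ := haps.1
    have hsum : ∑ j, ∑ g ∈ A j, p g = 1 := by
      rw [← Finset.sum_biUnion, hA.2, hp1]
      intro i _ j _ hij
      exact hA.1 i j hij
    have hex : ∃ j, ∑ g ∈ A j, p g ≤ 1 / n := by
      by_contra h
      push_neg at h
      have hlt : ∑ j : Fin n, (1/n : ℝ) < ∑ j, ∑ g ∈ A j, p g :=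
        Finset.sum_lt_sum_of_nonempty ⟨⟨0, hn⟩, mem_univ _⟩ (fun j _ => h j)
      have heq : ∑ j : Fin n, (1/n : ℝ) = 1 := by
        rw [Finset.sum_const, card_univ, Fintype.card_fin, nsmul_eq_mul,
          mul_one_div, div_self (ne_of_gt hnR)]
      rw [heq, hsum] at hlt
      exact lt_irrefl _ hlt
    obtain ⟨j, hj⟩ := hex
    exact le_trans (hAv j) (hpa _ hj)
  constructor
  · intro ha; linarith
  · intro hmu
    set G : Finset (Fin m) := univ.filter (fun g => v {g} ≠ 0) with hGdef
    have hGsing : ∀ g : Fin m, g ∉ G → v {g} = 0 := by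
      intro g hg
      by_contra hne
      exact hg (by simp [hGdef, hne])
    have haneg : a ≤ 0 := by
      rcases G.eq_empty_or_nonempty with hG | hG
      · obtain ⟨p, hp0, hp1, _⟩ := haps.1
        obtain ⟨S, hScheap, hSa⟩ := haps.2 p hp0 hp1
        have hvS : v S ≤ 0 := by
          calc v S ≤ ∑ g ∈ S, v {g} := hsub S
            _ = 0 := Finset.sum_eq_zero fun g _ =>
                hGsing g (by simp [hG])
        linarith
      · have hGlt : G.card < n := by
          by_contra hGn
          push_neg at hGn
          obtain ⟨t, htG, htcard⟩ := Finset.exists_subset_card_eq hGn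
          set e := t.orderIsoOfFin htcard with he
          set c : Fin m → Fin n := fun g =>
            if h : ∃ i, ((e i : Fin m) = g) then h.choose else ⟨0, hn⟩ with hc
          obtain ⟨j, hj⟩ := hmms.2 _ (part_of_fun c)
          have hce : c (e j) = j := by
            have hex : ∃ i, ((e i : Fin m) = (e j : Fin m)) := ⟨j, rfl⟩
            have hch := hex.choose_spec
            have : (e hex.choose) = e j := Subtype.ext hch
            simp only [hc, dif_pos hex]
            exact e.injective this
          have hmem : ((e j : Fin m)) ∈ univ.filter (fun g => c g = j) := by
            simp [hce]
          have h1 : v {(e j : Fin m)} ≤ v (univ.filter (fun g => c g = j)) :=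
            hmono _ _ (Finset.singleton_subset_iff.mpr hmem)
          have h2 : (e j : Fin m) ∈ G := htG (e j).2
          have h3 : v {(e j : Fin m)} ≠ 0 := by
            simpa [hGdef] using h2
          have h4 : 0 < v {(e j : Fin m)} := lt_of_le_of_ne (hv0 _) (Ne.symm h3)
          rw [hmu] at hj
          linarith
        have hGcard : (0:ℝ) < (G.card : ℝ) := by
          exact_mod_cast Finset.card_pos.mpr hG
        set p : Fin m → ℝ := fun g => if g ∈ G then 1 / (G.card : ℝ) else 0 with hp
        have hp0 : ∀ g, 0 ≤ p g := by
          intro g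
          show (0:ℝ) ≤ if g ∈ G then 1 / (G.card : ℝ) else 0
          split <;> positivity
        have hp1 : ∑ g, p g = 1 := by
          rw [hp]
          rw [Finset.sum_ite_mem, Finset.univ_inter, Finset.sum_const,
            nsmul_eq_mul, mul_one_div, div_self (ne_of_gt hGcard)]
        obtain ⟨S, hScheap, hSa⟩ := haps.2 p hp0 hp1
        have hSG : ∀ g ∈ S, g ∉ G := by
          intro g hgS hgG
          have h1 : p g ≤ ∑ x ∈ S, p x := Finset.single_le_sum (fun x _ => hp0 x) hgS
          have h2 : (1:ℝ)/n < 1/(G.card : ℝ) := by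
            apply one_div_lt_one_div_of_lt hGcard
            exact_mod_cast hGlt
          have h3 : p g = 1/(G.card : ℝ) := by simp [hp, hgG]
          rw [h3] at h1
          linarith
        have hvS : v S ≤ 0 := by
          calc v S ≤ ∑ g ∈ S, v {g} := hsub S
            _ = 0 := Finset.sum_eq_zero fun g hg => hGsing g (hSG g hg)
        linarith
    linarith
end

section
/- Let v be a binary-marginal XOS valuation on [m] with n agents and MMS = 0. Then APS = 0, witnessed by the following pricing: there exist at most n−1 goods, each priced 1/(n−1) (all other goods priced 0), such that every bundle of total price at most 1/n has value 0 under v. -/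
open Finset

lemma xos_empty {m : ℕ} {v : Finset (Fin m) → ℝ} (hxos : IsXOS m v) : v ∅ = 0 := by
  obtain ⟨F, _, _, hex, _⟩ := hxos
  obtain ⟨f, _, hf⟩ := hex ∅
  simpa using hf

lemma xos_mono {m : ℕ} {v : Finset (Fin m) → ℝ} (hxos : IsXOS m v)
    {S T : Finset (Fin m)} (h : S ⊆ T) : v S ≤ v T := by
  obtain ⟨F, _, hnn, hex, hle⟩ := hxos
  obtain ⟨f, hfF, hf⟩ := hex S
  calc v S = ∑ g ∈ S, f g := hf
    _ ≤ ∑ g ∈ T, f g := Finset.sum_le_sum_of_subset_of_nonneg h (fun g _ _ => hnn f hfF g)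
    _ ≤ v T := hle f hfF T

lemma single_cases {m : ℕ} {v : Finset (Fin m) → ℝ} (hxos : IsXOS m v)
    (hbm : BinaryMarginals m v) (g : Fin m) : v {g} = 0 ∨ v {g} = 1 := by
  have h := hbm ∅ g
  rw [xos_empty hxos] at h
  simpa using h

lemma zero_of_singles {m : ℕ} {v : Finset (Fin m) → ℝ} (hxos : IsXOS m v)
    {S : Finset (Fin m)} (h : ∀ g ∈ S, v {g} = 0) : v S = 0 := by
  obtain ⟨F, _, hnn, hex, hle⟩ := hxos
  obtain ⟨f, hfF, hf⟩ := hex S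
  rw [hf]
  apply Finset.sum_eq_zero
  intro g hg
  have h1 : f g ≤ v {g} := by simpa using hle f hfF {g}
  have h2 := hnn f hfF g
  have h3 := h g hg
  linarith

lemma card_G_le {m n : ℕ} {v : Finset (Fin m) → ℝ} (hxos : IsXOS m v)
    (hn : 2 ≤ n) (hmms : IsMMS m n v 0) :
    (univ.filter (fun g : Fin m => v {g} = 1)).card ≤ n - 1 := by
  by_contra hc
  push_neg at hc
  set G := univ.filter (fun g : Fin m => v {g} = 1) with hG
  have hcard : n ≤ G.card := by omega
  obtain ⟨T, hTG, hT⟩ := Finset.exists_subset_card_eq hcard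
  have e : T ≃ Fin n := T.equivFinOfCardEq hT
  have hn0 : 0 < n := by omega
  set i₀ : Fin n := ⟨0, hn0⟩ with hi₀
  set A : Fin n → Finset (Fin m) :=
    fun i => if i = i₀ then insert ((e.symm i₀ : Fin m)) Tᶜ else {(e.symm i : Fin m)} with hA
  have hmemT : ∀ i : Fin n, ((e.symm i : Fin m)) ∈ T := fun i => (e.symm i).2
  have hsub : ∀ i : Fin n, {(e.symm i : Fin m)} ⊆ A i := by
    intro i
    by_cases hi : i = i₀ <;> simp [hA, hi]
  have hinj : ∀ i j : Fin n, i ≠ j → (e.symm i : Fin m) ≠ (e.symm j : Fin m) := by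
    intro i j hij hxy
    exact hij (by simpa [Subtype.ext_iff] using e.symm.injective (Subtype.ext hxy))
  have hpart : IsPartition m n A := by
    constructor
    · intro i j hij
      rw [Finset.disjoint_left]
      intro x hx hx'
      by_cases hi : i = i₀ <;> by_cases hj : j = i₀
      · exact hij (hi.trans hj.symm)
      · simp [hA, hi, hj] at hx hx'
        subst hx'
        rcases hx with hx | hx
        · exact hinj j i₀ hj hx
        · exact hx (hmemT j)
      · simp [hA, hi, hj] at hx hx'
        subst hx
        rcases hx' with hx' | hx'
        · exact hinj i i₀ hi hx'
        · exact hx' (hmemT i)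
      · simp [hA, hi, hj] at hx hx'
        exact hinj i j hij (hx ▸ hx' ▸ rfl)
    · apply Finset.eq_univ_iff_forall.mpr
      intro x
      simp only [mem_biUnion, mem_univ, true_and]
      by_cases hx : x ∈ T
      · refine ⟨e ⟨x, hx⟩, ?_⟩
        have hxe : (e.symm (e ⟨x, hx⟩) : Fin m) = x := by simp
        exact hsub _ (by simp [hxe])
      · exact ⟨i₀, by simp [hA, hx]⟩
  obtain ⟨j, hj⟩ := hmms.2 A hpart
  have h1 : v {(e.symm j : Fin m)} = 1 := by
    have := hTG (hmemT j)
    simpa [hG] using this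
  have := xos_mono hxos (hsub j)
  rw [h1] at this
  linarith

theorem xos_mms_zero_implies_aps_zero {m n : ℕ} (v : Finset (Fin m) → ℝ)
    (hxos : IsXOS m v) (hbm : BinaryMarginals m v) (hn : 2 ≤ n)
    (hmms : IsMMS m n v 0) :
    (∀ a : ℝ, IsAPS m n v a → a = 0) ∧
    ∃ G : Finset (Fin m), G.card ≤ n - 1 ∧
      ∀ S : Finset (Fin m),
        ((S ∩ G).card : ℝ) * (1 / ((n : ℝ) - 1)) ≤ 1 / n → v S = 0 := by
  classical
  set G := univ.filter (fun g : Fin m => v {g} = 1) with hG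
  have hGcard := card_G_le hxos hn hmms
  have hvzero : ∀ S : Finset (Fin m), (∀ g ∈ S, g ∉ G) → v S = 0 := by
    intro S hS
    apply zero_of_singles hxos
    intro g hg
    rcases single_cases hxos hbm g with h | h
    · exact h
    · exact absurd (by simp [hG, h]) (hS g hg)
  have hnR : (2:ℝ) ≤ (n:ℝ) := by exact_mod_cast hn
  have hdisj_zero : ∀ S : Finset (Fin m), S ∩ G = ∅ → v S = 0 := by
    intro S hempty
    apply hvzero S
    intro g hg hgG
    have hmem : g ∈ S ∩ G := mem_inter.mpr ⟨hg, hgG⟩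
    simp [hempty] at hmem
  constructor
  · intro a hap
    obtain ⟨⟨p, hp0, hp1, hp⟩, hall⟩ := hap
    have ha0 : 0 ≤ a := by
      have h := hp ∅ (by simp)
      rwa [xos_empty hxos] at h
    by_cases hm : m = 0
    · subst hm
      simp at hp1
    have hm1 : 1 ≤ m := by omega
    obtain ⟨q, hq0, hq1, hqcheap⟩ : ∃ q : Fin m → ℝ, (∀ g, 0 ≤ q g) ∧ (∑ g, q g = 1) ∧
        ∀ S : Finset (Fin m), (∑ g ∈ S, q g) ≤ 1/n → v S = 0 := by
      rcases G.eq_empty_or_nonempty with hGe | hGne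
      · refine ⟨fun _ => (m:ℝ)⁻¹, fun g => by positivity, ?_, ?_⟩
        · rw [Finset.sum_const, card_univ, Fintype.card_fin, nsmul_eq_mul]
          field_simp
        · intro S _
          exact hdisj_zero S (by simp [hGe])
      · have hGpos : (0:ℝ) < G.card := by exact_mod_cast Finset.card_pos.mpr hGne
        refine ⟨fun g => if g ∈ G then (G.card : ℝ)⁻¹ else 0,
          fun g => by positivity, ?_, ?_⟩
        · rw [Finset.sum_ite_mem, Finset.univ_inter, Finset.sum_const, nsmul_eq_mul]
          field_simp
        · intro S hScheap
          rw [Finset.sum_ite_mem, Finset.sum_const, nsmul_eq_mul] at hScheap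
          apply hdisj_zero
          by_contra hne
          have hc : 1 ≤ ((S ∩ G).card : ℝ) := by
            have := Finset.card_pos.mpr (Finset.nonempty_iff_ne_empty.mpr hne)
            exact_mod_cast this
          have hGn : (G.card : ℝ) ≤ (n:ℝ) - 1 := by
            have : (G.card : ℝ) ≤ ((n - 1 : ℕ) : ℝ) := by exact_mod_cast hGcard
            rw [Nat.cast_sub (by omega)] at this
            simpa using this
          have h1 : (G.card : ℝ)⁻¹ ≤ ((S ∩ G).card : ℝ) * (G.card : ℝ)⁻¹ := by
            nlinarith [inv_pos.mpr hGpos]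
          have h2 : 1/(n:ℝ) < (G.card : ℝ)⁻¹ := by
            rw [one_div, inv_lt_inv₀ (by linarith) hGpos]
            linarith
          linarith
    obtain ⟨S, hScheap, haS⟩ := hall q hq0 hq1
    have := hqcheap S hScheap
    linarith
  · refine ⟨G, hGcard, ?_⟩
    intro S hS
    apply hdisj_zero
    by_contra hne
    have hc : 1 ≤ ((S ∩ G).card : ℝ) := by
      have := Finset.card_pos.mpr (Finset.nonempty_iff_ne_empty.mpr hne)
      exact_mod_cast this
    have hpos : (0:ℝ) < (n:ℝ) - 1 := by linarith
    have h1 : 1 / ((n:ℝ) - 1) ≤ ((S ∩ G).card : ℝ) * (1 / ((n : ℝ) - 1)) := by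
      nlinarith [one_div_pos.mpr hpos]
    have h2 : 1/(n:ℝ) < 1/((n:ℝ) - 1) := by
      apply one_div_lt_one_div_of_lt <;> linarith
    linarith
end

section
/- Let v be an XOS valuation with binary marginals and let S be any set with v(S) ≥ k for an integer k ≥ 0. Then there exists a subset S' ⊆ S with v(S') = |S'| = k. -/
open Finset

theorem xos_subset_of_value_k {m : ℕ} (v : Finset (Fin m) → ℝ)
    (hxos : IsXOS m v) (hbm : BinaryMarginals m v)
    (S : Finset (Fin m)) (k : ℕ) (hk : (k : ℝ) ≤ v S) :
    ∃ S' ⊆ S, v S' = (k : ℝ) ∧ S'.card = k := by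
  classical
  obtain ⟨F, hFne, hFnonneg, hFexact, hFle⟩ := hxos
  have hempty : v ∅ = 0 := by
    obtain ⟨f, hf, hfe⟩ := hFexact ∅
    simpa using hfe
  have hnat : ∀ T : Finset (Fin m), ∃ n : ℕ, v T = n := by
    intro T
    induction T using Finset.induction_on with
    | empty => exact ⟨0, by simpa using hempty⟩
    | @insert a s ha ih =>
      obtain ⟨n, hn⟩ := ih
      rcases hbm s a with h | h
      · exact ⟨n, by linarith⟩
      · exact ⟨n + 1, by push_cast; linarith⟩
  rcases Nat.eq_zero_or_pos k with hk0 | hkpos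
  · subst hk0
    exact ⟨∅, Finset.empty_subset S, by simpa using hempty, rfl⟩
  -- pick a minimal-cardinality subset T of S with k ≤ v T
  have hSne : S ∈ S.powerset.filter fun T => (k : ℝ) ≤ v T := by
    simp [hk]
  obtain ⟨T, hTmem, hTmin⟩ :=
    Finset.exists_min_image (S.powerset.filter fun T => (k : ℝ) ≤ v T)
      Finset.card ⟨S, hSne⟩
  rw [Finset.mem_filter, Finset.mem_powerset] at hTmem
  obtain ⟨hTS, hTval⟩ := hTmem
  have hTnonempty : T.Nonempty := by
    rcases T.eq_empty_or_nonempty with rfl | h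
    · rw [hempty] at hTval
      exact absurd hTval (by push_neg; exact_mod_cast hkpos)
    · exact h
  -- for every g ∈ T, v (T.erase g) < k, hence ≤ k - 1 by integrality
  have herase : ∀ g ∈ T, v (T.erase g) ≤ (k : ℝ) - 1 := by
    intro g hg
    have hlt : ¬ ((k : ℝ) ≤ v (T.erase g)) := by
      intro hle
      have hmem : T.erase g ∈ S.powerset.filter fun T => (k : ℝ) ≤ v T := by
        rw [Finset.mem_filter, Finset.mem_powerset]
        exact ⟨(Finset.erase_subset g T).trans hTS, hle⟩
      have := hTmin _ hmem
      have hcard : (T.erase g).card < T.card := Finset.card_erase_lt_of_mem hg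
      omega
    push_neg at hlt
    obtain ⟨n, hn⟩ := hnat (T.erase g)
    rw [hn] at hlt ⊢
    have : n < k := by exact_mod_cast hlt
    have : n ≤ k - 1 := by omega
    have hk1 : ((k : ℕ) : ℝ) - 1 = ((k - 1 : ℕ) : ℝ) := by
      push_cast [hkpos]; ring
    rw [hk1]
    exact_mod_cast this
  -- v T = k
  obtain ⟨g0, hg0⟩ := hTnonempty
  have hTins : v T = v (insert g0 (T.erase g0)) := by
    rw [Finset.insert_erase hg0]
  have hvT : v T = (k : ℝ) := by
    have h1 := herase g0 hg0
    rcases hbm (T.erase g0) g0 with h | h <;> rw [← hTins] at h <;> linarith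
  -- additive witness for T
  obtain ⟨f, hfF, hfT⟩ := hFexact T
  have hfle1 : ∀ g : Fin m, f g ≤ 1 := by
    intro g
    have h1 : f g ≤ v {g} := by
      have := hFle f hfF {g}
      simpa using this
    rcases hbm ∅ g with h | h <;> rw [hempty] at h <;> simp at h <;> linarith
  have hfge1 : ∀ g ∈ T, 1 ≤ f g := by
    intro g hg
    have hsum : ∑ x ∈ T.erase g, f x + f g = ∑ x ∈ T, f x :=
      Finset.sum_erase_add T f hg
    have h1 : ∑ x ∈ T.erase g, f x ≤ v (T.erase g) := hFle f hfF _
    have h2 := herase g hg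
    rw [hvT] at hfT
    linarith
  have hfeq1 : ∀ g ∈ T, f g = 1 := fun g hg => le_antisymm (hfle1 g) (hfge1 g hg)
  have hcard : (k : ℝ) = (T.card : ℝ) := by
    rw [← hvT, hfT, Finset.sum_congr rfl hfeq1]
    simp
  exact ⟨T, hTS, hvT, by exact_mod_cast hcard.symm⟩
end

section
/- Let v be a subadditive valuation on [m] with n agents and suppose [m] is partitioned into A_1, ..., A_n, R with v(A_j) ≤ V for all j and v(R) ≤ W. Define prices p_g = 1/(n·|A_k|) for g ∈ A_k and p_g = 0 for g ∈ R, assuming each A_k is nonempty; then the total price is 1, and if additionally v has binary marginals (so any set T satisfies v(T) ≤ |T|), every bundle of price at most 1/n has value at most V + W under v. -/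
/-!
Every good of a bundle `A k` costs `1 / (n |A k|) ≥ 1 / (n V)`, since `|A k| = v (A k) ≤ V`;
so a bundle of price at most `1 / n` contains at most `V` priced goods, which by binary marginals
are worth at most `V`. The remaining goods lie in `R` and are worth at most `v R ≤ W`.
-/

open Finset

theorem BinaryMarginals.le_card {m : ℕ} {v : Finset (Fin m) → ℝ} (hbm : BinaryMarginals m v)
    (h0 : v ∅ = 0) (T : Finset (Fin m)) : v T ≤ #T := by
  induction T using Finset.induction_on with
  | empty => simp [h0]
  | insert g T hg ih =>
    rw [card_insert_of_notMem hg, Nat.cast_succ]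
    rcases hbm T g with h | h <;> linarith

theorem le_inter_add_of_union_eq_univ {α : Type*} [Fintype α] [DecidableEq α]
    {v : Finset α → ℝ} (hmono : ∀ A B : Finset α, A ⊆ B → v A ≤ v B)
    (hsub : ∀ A B : Finset α, v (A ∪ B) ≤ v A + v B) {B R : Finset α} (hcover : B ∪ R = univ)
    (S : Finset α) : v S ≤ v (S ∩ B) + v R :=
  calc v S = v (S ∩ B ∪ S ∩ R) := by rw [← inter_union_distrib_left, hcover, inter_univ]
    _ ≤ v (S ∩ B) + v (S ∩ R) := hsub _ _
    _ ≤ v (S ∩ B) + v R := by gcongr; exact hmono _ _ inter_subset_right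

theorem sum_eq_one_div_of_eq_one_div_mul_card {α : Type*} {A : Finset α} {p : α → ℝ} (x : ℝ)
    (hA : A.Nonempty) (hp : ∀ g ∈ A, p g = 1 / (x * #A)) : ∑ g ∈ A, p g = 1 / x := by
  have hcard : (#A : ℝ) ≠ 0 := by exact_mod_cast hA.card_pos.ne'
  rw [sum_congr rfl hp, sum_const, nsmul_eq_mul]
  field_simp

theorem mul_card_inter_le_sum {α : Type*} [DecidableEq α] {p : α → ℝ} {B S : Finset α} {c : ℝ}
    (hc : ∀ g ∈ B, c ≤ p g) (hp : ∀ g ∈ S, 0 ≤ p g) : #(S ∩ B) * c ≤ ∑ g ∈ S, p g :=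
  calc #(S ∩ B) * c = #(S ∩ B) • c := (nsmul_eq_mul _ _).symm
    _ ≤ ∑ g ∈ S ∩ B, p g := card_nsmul_le_sum _ _ _ fun g hg ↦ hc g (mem_inter.1 hg).2
    _ ≤ ∑ g ∈ S, p g := sum_le_sum_of_subset_of_nonneg inter_subset_left fun g hg _ ↦ hp g hg

section BalancedPrices

variable {α : Type*} [DecidableEq α] {n : ℕ} {A : Fin n → Finset α} {R : Finset α}
  {p : α → ℝ}

theorem price_nonneg [Fintype α] (hcover : univ.biUnion A ∪ R = univ)
    (hpA : ∀ k : Fin n, ∀ g ∈ A k, p g = 1 / ((n : ℝ) * #(A k))) (hpR : ∀ g ∈ R, p g = 0)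
    (g : α) : 0 ≤ p g := by
  have hg : g ∈ univ.biUnion A ∪ R := hcover ▸ mem_univ g
  rcases mem_union.1 hg with hg | hg
  · obtain ⟨k, -, hgk⟩ := mem_biUnion.1 hg
    rw [hpA k g hgk]
    positivity
  · rw [hpR g hg]

theorem sum_price_eq_one [Fintype α] (hn : 1 ≤ n)
    (hdisj : ∀ i j : Fin n, i ≠ j → Disjoint (A i) (A j)) (hdisjR : ∀ j : Fin n, Disjoint (A j) R) (hcover : univ.biUnion A ∪ R = univ)
    (hne : ∀ k : Fin n, (A k).Nonempty)
    (hpA : ∀ k : Fin n, ∀ g ∈ A k, p g = 1 / ((n : ℝ) * #(A k))) (hpR : ∀ g ∈ R, p g = 0) :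
    ∑ g, p g = 1 := by
  have hn0 : (n : ℝ) ≠ 0 := by exact_mod_cast (Nat.one_le_iff_ne_zero.1 hn)
  rw [← hcover, sum_union ((disjoint_biUnion_left _ _ _).2 fun k _ ↦ hdisjR k),
    sum_biUnion fun i _ j _ hij ↦ hdisj i j hij, sum_eq_zero hpR,
    sum_congr rfl fun k _ ↦ sum_eq_one_div_of_eq_one_div_mul_card _ (hne k) (hpA k)]
  simp [hn0]

theorem one_div_mul_le_price {V : ℝ} (hne : ∀ k : Fin n, (A k).Nonempty)
    (hV : ∀ k : Fin n, (#(A k) : ℝ) ≤ V)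
    (hpA : ∀ k : Fin n, ∀ g ∈ A k, p g = 1 / ((n : ℝ) * #(A k))) :
    ∀ g ∈ univ.biUnion A, 1 / ((n : ℝ) * V) ≤ p g := by
  intro g hg
  obtain ⟨k, -, hgk⟩ := mem_biUnion.1 hg
  have hn : (0 : ℝ) < n := by exact_mod_cast k.pos
  have hcard : (0 : ℝ) < #(A k) := by exact_mod_cast (hne k).card_pos
  rw [hpA k g hgk]
  gcongr
  exact hV k

theorem card_inter_biUnion_le_of_sum_price_le [Fintype α] {V : ℝ} (hn : 1 ≤ n)
    (hcover : univ.biUnion A ∪ R = univ) (hne : ∀ k : Fin n, (A k).Nonempty)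
    (hV : ∀ k : Fin n, (#(A k) : ℝ) ≤ V)
    (hpA : ∀ k : Fin n, ∀ g ∈ A k, p g = 1 / ((n : ℝ) * #(A k))) (hpR : ∀ g ∈ R, p g = 0)
    {S : Finset α} (hS : ∑ g ∈ S, p g ≤ 1 / n) : (#(S ∩ univ.biUnion A) : ℝ) ≤ V := by
  have hn0 : (0 : ℝ) < n := by exact_mod_cast hn
  have hV0 : 0 < V := lt_of_lt_of_le (by exact_mod_cast (hne ⟨0, hn⟩).card_pos) (hV ⟨0, hn⟩)
  have hcount := (mul_card_inter_le_sum (one_div_mul_le_price hne hV hpA)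
    fun g _ ↦ price_nonneg hcover hpA hpR g).trans hS
  rw [mul_one_div, div_le_div_iff₀ (by positivity) hn0, one_mul, mul_comm (n : ℝ) V] at hcount
  exact le_of_mul_le_mul_right hcount hn0

end BalancedPrices

theorem price_bound_from_balanced_partition {m n : ℕ}
    (v : Finset (Fin m) → ℝ)
    (hmono : ∀ A B : Finset (Fin m), A ⊆ B → v A ≤ v B)
    (hsub : ∀ A B : Finset (Fin m), v (A ∪ B) ≤ v A + v B)
    (h0 : v ∅ = 0)
    (hbm : BinaryMarginals m v)
    (hn : 1 ≤ n)
    (A : Fin n → Finset (Fin m)) (R : Finset (Fin m))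
    (hdisj : ∀ i j : Fin n, i ≠ j → Disjoint (A i) (A j))
    (hdisjR : ∀ j : Fin n, Disjoint (A j) R)
    (hcover : Finset.univ.biUnion A ∪ R = (Finset.univ : Finset (Fin m)))
    (hne : ∀ k : Fin n, (A k).Nonempty)
    (hnw : ∀ k : Fin n, v (A k) = ((A k).card : ℝ))
    (V W : ℝ)
    (hV : ∀ j : Fin n, v (A j) ≤ V) (hW : v R ≤ W)
    (p : Fin m → ℝ)
    (hpA : ∀ k : Fin n, ∀ g ∈ A k, p g = 1 / ((n : ℝ) * (A k).card))
    (hpR : ∀ g ∈ R, p g = 0) :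
    (∑ g, p g = 1) ∧
    ∀ S : Finset (Fin m), (∑ g ∈ S, p g) ≤ 1 / n → v S ≤ V + W := by
  refine ⟨sum_price_eq_one hn hdisj hdisjR hcover hne hpA hpR, fun S hS ↦ ?_⟩
  have hpriced := card_inter_biUnion_le_of_sum_price_le hn hcover hne
    (fun k ↦ hnw k ▸ hV k) hpA hpR hS
  calc v S ≤ v (S ∩ univ.biUnion A) + v R := le_inter_add_of_union_eq_univ hmono hsub hcover S
    _ ≤ V + W := add_le_add ((hbm.le_card h0 _).trans hpriced) hW
end
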